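/- arXiv:1608.00755 — 9 statements merged into one kernel-verified Lean document; each statement's English description precedes it below -/
import Mathlib

section
/- Let X, Y be smooth real Banach spaces, T : X → Y a bounded linear operator attaining its norm at a unit vector x. Then T maps the Birkhoff-James orthogonal complement of x into the Birkhoff-James orthogonal complement of Tx: for every w ∈ X with x ⊥_B w, one has Tx ⊥_B Tw. -/
/-- Birkhoff-James orthogonality: `u ⊥_B v` iff `‖u + λ v‖ ≥ ‖u‖` for all real `λ`. -/
def BJOrth {E : Type*} [NormedAddCommGroup E] [NormedSpace ℝ E] (u v : E) : Prop :=
  ∀ l : ℝ, ‖u‖ ≤ ‖u + l • v‖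

/-!
If `x ⊥_B w`, Hahn–Banach on the quotient by `ℝ w` gives a norm-one functional supporting `x`
and vanishing at `w`. If `T` attains its norm at `x` and `G` supports `T x`, then
`‖T x‖⁻¹ • (G ∘ T)` also supports `x`; smoothness at `x` forces the two functionals to agree, so
`G` vanishes at `T w`, and a norm-one functional supporting `T x` and vanishing at `T w`
witnesses `T x ⊥_B T w`.
-/

section BJOrth

variable {E : Type*} [NormedAddCommGroup E] [NormedSpace ℝ E]

theorem BJOrth.zero_left (v : E) : BJOrth 0 v := fun l => by simp

theorem BJOrth.of_dual {u v : E} {f : StrongDual ℝ E} (hf : ‖f‖ ≤ 1) (hfu : f u = ‖u‖)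
    (hfv : f v = 0) : BJOrth u v := fun l =>
  calc ‖u‖ = f (u + l • v) := by simp [hfu, hfv]
    _ ≤ ‖f‖ * ‖u + l • v‖ := (le_abs_self _).trans (f.le_opNorm _)
    _ ≤ ‖u + l • v‖ := mul_le_of_le_one_left (norm_nonneg _) hf

theorem BJOrth.norm_mk_span_singleton {u v : E} (h : BJOrth u v) :
    ‖(Submodule.Quotient.mk u : E ⧸ ℝ ∙ v)‖ = ‖u‖ := by
  refine le_antisymm (Submodule.Quotient.norm_mk_le _ _) (QuotientAddGroup.le_norm_iff.2 ?_)
  intro m hm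
  obtain ⟨t, ht⟩ := Submodule.mem_span_singleton.1 ((Submodule.Quotient.eq _).1 hm)
  calc ‖u‖ ≤ ‖u + t • v‖ := h t
    _ = ‖m‖ := by rw [ht, add_sub_cancel]

theorem BJOrth.exists_dual {u v : E} (h : BJOrth u v) :
    ∃ f : StrongDual ℝ E, ‖f‖ ≤ 1 ∧ f u = ‖u‖ ∧ f v = 0 := by
  obtain ⟨g, hg, hgu⟩ := exists_dual_vector'' ℝ (Submodule.Quotient.mk u : E ⧸ ℝ ∙ v)
  refine ⟨g.comp (ℝ ∙ v).mkQL, ?_, ?_, ?_⟩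
  · refine ContinuousLinearMap.opNorm_le_bound _ zero_le_one fun y => ?_
    calc ‖g (Submodule.Quotient.mk y)‖ ≤ ‖g‖ * ‖(Submodule.Quotient.mk y : E ⧸ ℝ ∙ v)‖ :=
          g.le_opNorm _
      _ ≤ 1 * ‖y‖ := mul_le_mul hg (Submodule.Quotient.norm_mk_le _ _) (norm_nonneg _) zero_le_one
  · simpa [h.norm_mk_span_singleton] using hgu
  · simp [(Submodule.Quotient.mk_eq_zero _).2 (Submodule.mem_span_singleton_self v)]

end BJOrth

theorem StrongDual.norm_inv_smul_comp_le_one {X Y : Type*} [SeminormedAddCommGroup X]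
    [NormedSpace ℝ X] [SeminormedAddCommGroup Y] [NormedSpace ℝ Y] {T : X →L[ℝ] Y} {x : X}
    (hatt : ‖T x‖ = ‖T‖) {G : StrongDual ℝ Y} (hG : ‖G‖ ≤ 1) :
    ‖‖T x‖⁻¹ • G.comp T‖ ≤ 1 :=
  calc ‖‖T x‖⁻¹ • G.comp T‖ ≤ ‖T‖⁻¹ * (1 * ‖T‖) := by
        rw [norm_smul, norm_inv, norm_norm, hatt]
        gcongr
        exact (G.opNorm_comp_le T).trans (by gcongr)
    _ ≤ 1 := by rw [one_mul]; exact inv_mul_le_one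

theorem StrongDual.norm_eq_one_of_apply_eq_one {E : Type*} [SeminormedAddCommGroup E]
    [NormedSpace ℝ E] {f : StrongDual ℝ E} {x : E} (hx : ‖x‖ = 1) (hf : ‖f‖ ≤ 1)
    (hfx : f x = 1) : ‖f‖ = 1 :=
  le_antisymm hf (by simpa [hx, hfx] using f.le_opNorm x)

theorem stmt3_general {X Y : Type*} [NormedAddCommGroup X] [NormedSpace ℝ X]
    [NormedAddCommGroup Y] [NormedSpace ℝ Y]
    (hsmX : ∀ z : X, ‖z‖ = 1 → ∃! f : X →L[ℝ] ℝ, ‖f‖ = 1 ∧ f z = 1)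
    (T : X →L[ℝ] Y) (x : X) (hx : ‖x‖ = 1) (hatt : ‖T x‖ = ‖T‖)
    (w : X) (hw : BJOrth x w) : BJOrth (T x) (T w) := by
  rcases eq_or_ne (T x) 0 with hTx | hTx
  · simpa [hTx] using BJOrth.zero_left (T w)
  obtain ⟨f, hf, hfx, hfw⟩ := hw.exists_dual
  have hTx_ne : ‖T x‖ ≠ 0 := norm_ne_zero_iff.2 hTx
  obtain ⟨G, hG, hGTx⟩ := exists_dual_vector ℝ (T x) hTx_ne
  set F : StrongDual ℝ X := ‖T x‖⁻¹ • G.comp T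
  have hFx : F x = 1 := by simp [F, hGTx, hTx_ne]
  have hF : ‖F‖ ≤ 1 := StrongDual.norm_inv_smul_comp_le_one hatt hG.le
  have hfF : f = F := (hsmX x hx).unique
    ⟨StrongDual.norm_eq_one_of_apply_eq_one hx hf (hfx.trans hx), hfx.trans hx⟩
    ⟨StrongDual.norm_eq_one_of_apply_eq_one hx hF hFx, hFx⟩
  have hGTw : G (T w) = 0 := by
    simpa [F, hTx_ne, hfw] using (congrArg (· w) hfF).symm
  exact BJOrth.of_dual hG.le hGTx hGTw

theorem stmt3 {X Y : Type*} [NormedAddCommGroup X] [NormedSpace ℝ X] [CompleteSpace X]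
    [NormedAddCommGroup Y] [NormedSpace ℝ Y] [CompleteSpace Y]
    (hsmX : ∀ z : X, ‖z‖ = 1 → ∃! f : X →L[ℝ] ℝ, ‖f‖ = 1 ∧ f z = 1)
    (hsmY : ∀ z : Y, ‖z‖ = 1 → ∃! f : Y →L[ℝ] ℝ, ‖f‖ = 1 ∧ f z = 1)
    (T : X →L[ℝ] Y) (x : X) (hx : ‖x‖ = 1) (hatt : ‖T x‖ = ‖T‖)
    (w : X) (hw : BJOrth x w) : BJOrth (T x) (T w) :=
  stmt3_general hsmX T x hx hatt w hw
end

section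
/- Let X be a two-dimensional strictly convex real normed space and let x₁, x₂ be unit vectors with x₁ ≠ ±x₂. If z ∈ X satisfies x₁ ⊥_B z and x₂ ⊥_B z, then z = 0. -/
/-! If `x₁ ⊥_B z` with `z ≠ 0`, then `x₁, z` is a basis, so `x₂ = a x₁ + b z`. Orthogonality of
`x₂` to `z` gives `‖x₂‖ ≤ ‖x₂ - b z‖ = |a|`, and orthogonality of `x₁` to `z` gives
`1 ≤ ‖x₁ + (b/a) z‖ = 1/|a|`. Hence `‖x₁ + (b/a) z‖ = ‖x₁‖`; by strict convexity the midpoint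
`x₁ + (b/2a) z` would otherwise be strictly shorter than `x₁`, so `b = 0` and `x₂ = ±x₁`. -/

namespace BJOrth

variable {E : Type*} [NormedAddCommGroup E] [NormedSpace ℝ E] {u v : E}

theorem linearIndependent (h : BJOrth u v) (hu : u ≠ 0) (hv : v ≠ 0) :
    LinearIndependent ℝ ![u, v] := by
  refine linearIndependent_fin2.2 ⟨hv, fun a hav => hu ?_⟩
  simp only [Matrix.cons_val_one, Matrix.cons_val_zero] at hav
  have := h (-a)
  rwa [neg_smul, hav, add_neg_cancel, norm_zero, norm_le_zero_iff] at this

theorem smul_eq_zero_of_norm_add_smul_eq [StrictConvexSpace ℝ E] (h : BJOrth u v) {t : ℝ}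
    (ht : ‖u + t • v‖ = ‖u‖) : t • v = 0 := by
  by_contra htv
  have hmid : ‖(1 / 2 : ℝ) • (u + (u + t • v))‖ < ‖u‖ :=
    (norm_midpoint_lt_iff ht.symm).2 fun hu => htv (by simpa using hu.symm)
  have hmid_eq : (1 / 2 : ℝ) • (u + (u + t • v)) = u + (t / 2) • v := by module
  exact (h (t / 2)).not_gt (hmid_eq ▸ hmid)

theorem smul_eq_zero_of_eq_add [StrictConvexSpace ℝ E] {w : E} (hu : BJOrth u v)
    (hw : BJOrth w v) (hw0 : w ≠ 0) {a b : ℝ} (hwab : w = a • u + b • v) : b • v = 0 := by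
  have hw_le : ‖w‖ ≤ |a| * ‖u‖ := by
    simpa [hwab, norm_smul] using hw (-b)
  have ha : a ≠ 0 := by
    rintro rfl
    exact hw0 (norm_le_zero_iff.1 (by simpa using hw_le))
  have hdiv : u + (b / a) • v = a⁻¹ • w := by
    rw [hwab, smul_add, smul_smul, smul_smul, inv_mul_cancel₀ ha, one_smul, div_eq_inv_mul]
  have hnorm : ‖u + (b / a) • v‖ = ‖u‖ := by
    refine le_antisymm ?_ (hu (b / a))
    rw [hdiv, norm_smul, norm_inv, Real.norm_eq_abs, inv_mul_le_iff₀ (abs_pos.2 ha)]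
    exact hw_le
  have := hu.smul_eq_zero_of_norm_add_smul_eq hnorm
  rwa [div_eq_inv_mul, ← smul_smul, smul_eq_zero, or_iff_right (inv_ne_zero ha)] at this

end BJOrth

theorem stmt6 {X : Type*} [NormedAddCommGroup X] [NormedSpace ℝ X]
    [StrictConvexSpace ℝ X] (hdim : Module.finrank ℝ X = 2)
    (x₁ x₂ : X) (hx₁ : ‖x₁‖ = 1) (hx₂ : ‖x₂‖ = 1)
    (hne : x₁ ≠ x₂) (hne' : x₁ ≠ -x₂)
    (z : X) (h₁ : BJOrth x₁ z) (h₂ : BJOrth x₂ z) : z = 0 := by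
  by_contra hz
  have hx₁0 : x₁ ≠ 0 := norm_ne_zero_iff.1 (by simp [hx₁])
  have hx₂0 : x₂ ≠ 0 := norm_ne_zero_iff.1 (by simp [hx₂])
  have hspan : Submodule.span ℝ {x₁, z} = ⊤ := by
    simpa [Matrix.range_cons, Matrix.range_empty, Set.pair_comm] using
      (h₁.linearIndependent hx₁0 hz).span_eq_top_of_card_eq_finrank (by simp [hdim])
  obtain ⟨a, b, hab⟩ := Submodule.mem_span_pair.1 (hspan ▸ Submodule.mem_top : x₂ ∈ _)
  have hx₂a : x₂ = a • x₁ := by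
    rw [← hab, h₁.smul_eq_zero_of_eq_add h₂ hx₂0 hab.symm, add_zero]
  have ha : |a| = 1 := by simpa [hx₂a, norm_smul, hx₁] using hx₂
  rcases abs_eq zero_le_one |>.1 ha with rfl | rfl
  · exact hne (by simp [hx₂a])
  · exact hne' (by simp [hx₂a])
end

section
/- Let X be a finite-dimensional strictly convex real normed space and T : X → X a linear operator with ‖T‖ = 1 satisfying the Daugavet equation ‖I + T‖ = 1 + ‖T‖ = 2. Then T has a fixed point on the unit sphere: there exists a unit vector x₀ with Tx₀ = x₀. -/
theorem stmt7 {X : Type*} [NormedAddCommGroup X] [NormedSpace ℝ X]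
    [FiniteDimensional ℝ X] [StrictConvexSpace ℝ X]
    (T : X →L[ℝ] X) (hT : ‖T‖ = 1)
    (hDaug : ‖ContinuousLinearMap.id ℝ X + T‖ = 2) :
    ∃ x₀ : X, ‖x₀‖ = 1 ∧ T x₀ = x₀ := by
  have hTne : T ≠ 0 := by
    intro h; rw [h, norm_zero] at hT; norm_num at hT
  obtain ⟨y, hy⟩ : ∃ y, T y ≠ 0 := by
    by_contra h; push_neg at h
    exact hTne (ContinuousLinearMap.ext fun z => by simp [h z])
  have : Nontrivial X := nontrivial_of_ne y 0 fun h => hy (by simp [h])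
  set A := ContinuousLinearMap.id ℝ X + T with hA
  have hsc : IsCompact (Metric.sphere (0 : X) 1) := isCompact_sphere 0 1
  have hsne : (Metric.sphere (0 : X) 1).Nonempty :=
    NormedSpace.sphere_nonempty.mpr zero_le_one
  obtain ⟨x, hxs, hmax⟩ := hsc.exists_isMaxOn hsne
    ((continuous_norm.comp A.continuous).continuousOn)
  have hx1 : ‖x‖ = 1 := by simpa using hxs
  have hAx : ‖A x‖ = 2 := by
    refine le_antisymm ?_ ?_
    · calc ‖A x‖ ≤ ‖A‖ * ‖x‖ := A.le_opNorm x
        _ = 2 := by rw [hx1, hDaug]; ring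
    · rw [← hDaug]
      refine ContinuousLinearMap.opNorm_le_bound _ (norm_nonneg _) fun z => ?_
      rcases eq_or_ne z 0 with rfl | hz
      · simp
      · have hzs : (‖z‖⁻¹ • z) ∈ Metric.sphere (0 : X) 1 := by
          simp [norm_smul, norm_ne_zero_iff.mpr hz, inv_mul_cancel₀ (norm_ne_zero_iff.mpr hz)]
        have := hmax hzs
        simp only [Set.mem_setOf_eq, Function.comp_apply, map_smul, norm_smul, norm_inv, norm_norm] at this
        have hzpos : (0:ℝ) < ‖z‖ := norm_pos_iff.mpr hz
        calc ‖A z‖ = ‖z‖ * (‖z‖⁻¹ * ‖A z‖) := by field_simp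
          _ ≤ ‖z‖ * ‖A x‖ := by
              exact mul_le_mul_of_nonneg_left this hzpos.le
          _ = ‖A x‖ * ‖z‖ := mul_comm _ _
  have hAxe : ‖x + T x‖ = 2 := by simpa [hA] using hAx
  have hTx1 : ‖T x‖ = 1 := by
    have h1 : ‖T x‖ ≤ 1 := by
      calc ‖T x‖ ≤ ‖T‖ * ‖x‖ := T.le_opNorm x
        _ = 1 := by rw [hT, hx1, one_mul]
    have h2 : (2:ℝ) ≤ ‖x‖ + ‖T x‖ := hAxe ▸ norm_add_le x (T x)
    linarith [hx1 ▸ h2]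
  have heq : x = T x :=
    eq_of_norm_eq_of_norm_add_eq (by rw [hx1, hTx1]) (by rw [hAxe, hx1, hTx1]; norm_num)
  exact ⟨x, hx1, heq.symm⟩
end

section
/- Let X be a finite-dimensional smooth and strictly convex real Banach space and T : X → X a nonzero linear operator satisfying the Daugavet equation ‖I + T‖ = 1 + ‖T‖. Then X has a T-invariant subspace of codimension one. -/
open Module

theorem LinearMap.finrank_quotient_ker_eq_one {K V : Type*} [Field K] [AddCommGroup V] [Module K V]
    {φ : V →ₗ[K] K} (hφ : φ ≠ 0) : finrank K (V ⧸ LinearMap.ker φ) = 1 := by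
  rw [(φ.quotKerEquivOfSurjective (LinearMap.surjective_of_ne_zero hφ)).finrank_eq,
    finrank_self]

theorem Module.End.HasEigenvalue.exists_invariant_finrank_quotient_eq_one {K V : Type*} [Field K]
    [AddCommGroup V] [Module K V] [FiniteDimensional K V] {f : End K V} {μ : K}
    (hμ : f.HasEigenvalue μ) :
    ∃ H : Submodule K V, (∀ h ∈ H, f h ∈ H) ∧ finrank K (V ⧸ H) = 1 := by
  set g := f - μ • 1
  have hg : LinearMap.range g < ⊤ := by
    rw [lt_top_iff_ne_top, Ne, LinearMap.range_eq_top, ← LinearMap.injective_iff_surjective,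
      ← LinearMap.ker_eq_bot, ← End.eigenspace_def]
    exact End.hasEigenvalue_iff.1 hμ
  obtain ⟨φ, hφ, hle⟩ := (LinearMap.range g).exists_le_ker_of_lt_top hg
  refine ⟨LinearMap.ker φ, fun h hh => ?_, LinearMap.finrank_quotient_ker_eq_one hφ⟩
  have hfh : f h = g h + μ • h := by simp [g]
  rw [hfh]
  exact add_mem (hle (LinearMap.mem_range_self g h)) (Submodule.smul_mem _ _ hh)

theorem ContinuousLinearMap.exists_norm_eq_one_norm_apply_eq_opNorm {E F : Type*}
    [NormedAddCommGroup E] [NormedSpace ℝ E] [FiniteDimensional ℝ E] [Nontrivial E]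
    [NormedAddCommGroup F] [NormedSpace ℝ F] (f : E →L[ℝ] F) :
    ∃ x : E, ‖x‖ = 1 ∧ ‖f x‖ = ‖f‖ := by
  have hsphere := isCompact_sphere (0 : E) 1
  obtain ⟨x, hx, hfx⟩ := (hsphere.image (continuous_norm.comp f.continuous)).sSup_mem
    ((NormedSpace.sphere_nonempty.2 zero_le_one).image _)
  exact ⟨x, mem_sphere_zero_iff_norm.1 hx, hfx.trans f.sSup_sphere_eq_norm⟩

theorem ContinuousLinearMap.apply_eq_opNorm_smul_of_norm_add_apply_eq {E : Type*}
    [NormedAddCommGroup E] [NormedSpace ℝ E] [StrictConvexSpace ℝ E] (T : E →L[ℝ] E) {x : E}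
    (hx : ‖x‖ = 1) (h : ‖x + T x‖ = 1 + ‖T‖) : T x = ‖T‖ • x := by
  have hTx : ‖T x‖ = ‖T‖ := by
    have hle := T.le_opNorm x
    rw [hx, mul_one] at hle
    linarith [norm_add_le x (T x)]
  have hray : SameRay ℝ x (T x) := by rw [sameRay_iff_norm_add, h, hx, hTx]
  simpa [hx, hTx] using sameRay_iff_norm_smul_eq.1 hray

theorem ContinuousLinearMap.hasEigenvalue_opNorm_of_norm_id_add_eq {E : Type*}
    [NormedAddCommGroup E] [NormedSpace ℝ E] [FiniteDimensional ℝ E] [StrictConvexSpace ℝ E]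
    (T : E →L[ℝ] E) (h : ‖ContinuousLinearMap.id ℝ E + T‖ = 1 + ‖T‖) :
    End.HasEigenvalue (T : End ℝ E) ‖T‖ := by
  have : Nontrivial E := by
    by_contra hE
    rw [not_nontrivial_iff_subsingleton] at hE
    rw [Subsingleton.elim (ContinuousLinearMap.id ℝ E + T) 0, norm_zero] at h
    linarith [norm_nonneg T]
  obtain ⟨x, hx, hSx⟩ := (ContinuousLinearMap.id ℝ E + T).exists_norm_eq_one_norm_apply_eq_opNorm
  rw [h] at hSx
  refine End.hasEigenvalue_of_hasEigenvector (x := x) ⟨?_, ne_zero_of_norm_ne_zero (by simp [hx])⟩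
  exact End.mem_eigenspace_iff.2 (T.apply_eq_opNorm_smul_of_norm_add_apply_eq hx hSx)

theorem stmt8_general {X : Type*} [NormedAddCommGroup X] [NormedSpace ℝ X]
    [FiniteDimensional ℝ X] [StrictConvexSpace ℝ X]
    (T : X →L[ℝ] X)
    (hDaug : ‖ContinuousLinearMap.id ℝ X + T‖ = 1 + ‖T‖) :
    ∃ H : Submodule ℝ X, (∀ h ∈ H, T h ∈ H) ∧ Module.finrank ℝ (X ⧸ H) = 1 :=
  (T.hasEigenvalue_opNorm_of_norm_id_add_eq hDaug).exists_invariant_finrank_quotient_eq_one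

theorem stmt8 {X : Type*} [NormedAddCommGroup X] [NormedSpace ℝ X]
    [FiniteDimensional ℝ X] [StrictConvexSpace ℝ X]
    (hsm : ∀ z : X, ‖z‖ = 1 → ∃! f : X →L[ℝ] ℝ, ‖f‖ = 1 ∧ f z = 1)
    (T : X →L[ℝ] X) (hT : T ≠ 0)
    (hDaug : ‖ContinuousLinearMap.id ℝ X + T‖ = 1 + ‖T‖) :
    ∃ H : Submodule ℝ X, (∀ h ∈ H, T h ∈ H) ∧ Module.finrank ℝ (X ⧸ H) = 1 :=
  stmt8_general T hDaug
end

section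
/- Let X be a finite-dimensional smooth real Banach space and T : X → X a nonzero linear operator such that ker T contains a nonzero right symmetric point. Then the linear span of the norm attainment set M_T is a proper subspace of X. -/
section

variable {E : Type*} [NormedAddCommGroup E] [NormedSpace ℝ E]

theorem BJOrth.exists_dual_vector {u v : E} (h : BJOrth u v) (hu : u ≠ 0) :
    ∃ f : E →L[ℝ] ℝ, ‖f‖ = 1 ∧ f u = ‖u‖ ∧ f v = 0 := by
  have : IsClosed ((ℝ ∙ v : Submodule ℝ E) : Set E) := Submodule.closed_of_finiteDimensional _
  have hq : ‖(Submodule.Quotient.mk u : E ⧸ ℝ ∙ v)‖ = ‖u‖ := h.norm_mk_span_singleton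
  obtain ⟨g, hg, hgu⟩ := _root_.exists_dual_vector ℝ (Submodule.Quotient.mk u : E ⧸ ℝ ∙ v)
    (by rw [hq]; exact norm_ne_zero_iff.2 hu)
  set f := g.comp (ℝ ∙ v).mkQL
  have hfu : f u = ‖u‖ := by simpa [f, hq] using hgu
  have hfv : f v = 0 := by
    simp [f, (Submodule.Quotient.mk_eq_zero _).2 (Submodule.mem_span_singleton_self v)]
  have hf_le : ‖f‖ ≤ 1 := f.opNorm_le_bound zero_le_one fun x => calc
    ‖f x‖ ≤ ‖g‖ * ‖(Submodule.Quotient.mk x : E ⧸ ℝ ∙ v)‖ := g.le_opNorm _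
    _ ≤ 1 * ‖x‖ := by rw [hg, one_mul, one_mul]; exact Submodule.Quotient.norm_mk_le _ x
  have hf_ge : 1 ≤ ‖f‖ := by
    have := f.le_opNorm u
    rw [hfu, Real.norm_of_nonneg (norm_nonneg u)] at this
    exact le_of_mul_le_mul_right (by linarith) (norm_pos_iff.2 hu)
  exact ⟨f, le_antisymm hf_le hf_ge, hfu, hfv⟩

theorem bjOrth_of_norm_apply_eq_opNorm_mul {F : Type*} [NormedAddCommGroup F] [NormedSpace ℝ F]
    {T : E →L[ℝ] F} (hT : T ≠ 0) {x z : E} (hx : ‖T x‖ = ‖T‖ * ‖x‖) (hz : T z = 0) :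
    BJOrth x z := fun l => by
  have : ‖T‖ * ‖x‖ ≤ ‖T‖ * ‖x + l • z‖ := calc
    ‖T‖ * ‖x‖ = ‖T (x + l • z)‖ := by rw [map_add, map_smul, hz, smul_zero, add_zero, hx]
    _ ≤ ‖T‖ * ‖x + l • z‖ := T.le_opNorm _
  exact le_of_mul_le_mul_left this (norm_pos_iff.2 hT)

theorem notMem_span_of_forall_bjOrth
    (hsm : ∀ z : E, ‖z‖ = 1 → ∃! f : E →L[ℝ] ℝ, ‖f‖ = 1 ∧ f z = 1)
    {z : E} (hz : z ≠ 0) {S : Set E} (hS : ∀ x ∈ S, BJOrth z x) :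
    z ∉ Submodule.span ℝ S := by
  have hz' : ‖z‖ ≠ 0 := norm_ne_zero_iff.2 hz
  set w := ‖z‖⁻¹ • z
  obtain ⟨f₀, ⟨-, hf₀w⟩, hf₀_unique⟩ := hsm w (by simp [w, norm_smul, hz'])
  have hS_ker : Submodule.span ℝ S ≤ LinearMap.ker (f₀ : E →ₗ[ℝ] ℝ) := by
    refine Submodule.span_le.2 fun x hx => ?_
    obtain ⟨f, hf, hfz, hfx⟩ := (hS x hx).exists_dual_vector hz
    have hfw : f w = 1 := by simp [w, hfz, hz']
    rw [SetLike.mem_coe, LinearMap.mem_ker, ContinuousLinearMap.coe_coe,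
      ← hf₀_unique f ⟨hf, hfw⟩, hfx]
  intro hz_mem
  have hf₀z : f₀ z = 0 := hS_ker hz_mem
  have : f₀ w = 0 := by simp [w, hf₀z]
  exact one_ne_zero (hf₀w ▸ this)

end

theorem stmt10_general {X : Type*} [NormedAddCommGroup X] [NormedSpace ℝ X]
    (hsm : ∀ z : X, ‖z‖ = 1 → ∃! f : X →L[ℝ] ℝ, ‖f‖ = 1 ∧ f z = 1)
    (T : X →L[ℝ] X) (hT : T ≠ 0)
    (z : X) (hz : z ≠ 0) (hker : T z = 0)
    (hrs : ∀ y : X, BJOrth y z → BJOrth z y) :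
    Submodule.span ℝ {x : X | ‖x‖ = 1 ∧ ‖T x‖ = ‖T‖} ≠ ⊤ := by
  intro htop
  refine notMem_span_of_forall_bjOrth hsm hz (fun x hx => hrs x ?_) (htop ▸ Submodule.mem_top)
  exact bjOrth_of_norm_apply_eq_opNorm_mul hT (by rw [hx.1, hx.2, mul_one]) hker

theorem stmt10 {X : Type*} [NormedAddCommGroup X] [NormedSpace ℝ X]
    [FiniteDimensional ℝ X]
    (hsm : ∀ z : X, ‖z‖ = 1 → ∃! f : X →L[ℝ] ℝ, ‖f‖ = 1 ∧ f z = 1)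
    (T : X →L[ℝ] X) (hT : T ≠ 0)
    (z : X) (hz : z ≠ 0) (hker : T z = 0)
    (hrs : ∀ y : X, BJOrth y z → BJOrth z y) :
    Submodule.span ℝ {x : X | ‖x‖ = 1 ∧ ‖T x‖ = ‖T‖} ≠ ⊤ :=
  stmt10_general hsm T hT z hz hker hrs
end

section
/- Let T be the linear operator on ℝ² with the sup norm (ℓ∞²) determined by T(1,1) = (1,0) and T(1,-1) = (1/2, 1/2). Then T attains its norm at (1,1), the vector (1,1) is Birkhoff-James orthogonal to (-1/2, 1), but T(1,1) = (1,0) is not Birkhoff-James orthogonal to T(-1/2, 1) = (-1/8, -3/8). -/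
lemma norm_vecCons_fin_two (a b : ℝ) : ‖![a, b]‖ = max |a| |b| := by
  simp [Pi.norm_def, Fin.univ_succ]

lemma bjOrth_one_one_of_mul_nonpos {a b : ℝ} (hab : a * b ≤ 0) :
    BJOrth ![(1 : ℝ), 1] ![a, b] := by
  intro l
  have hsum : ![(1 : ℝ), 1] + l • ![a, b] = ![1 + l * a, 1 + l * b] := by
    ext i; fin_cases i <;> simp
  rw [hsum, norm_vecCons_fin_two, norm_vecCons_fin_two, abs_one, max_self,
    le_max_iff, le_abs, le_abs]
  by_contra! hlt
  nlinarith [mul_pos_of_neg_of_neg (a := l * a) (b := l * b) (by linarith) (by linarith),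
    sq_nonneg l]

lemma map_eq_smul_map_one_one_add_smul_map_one_neg_one {M F : Type*} [AddCommGroup M]
    [Module ℝ M] [FunLike F (Fin 2 → ℝ) M] [LinearMapClass F ℝ (Fin 2 → ℝ) M]
    (f : F) (x : Fin 2 → ℝ) :
    f x = ((x 0 + x 1) / 2) • f ![1, 1] + ((x 0 - x 1) / 2) • f ![1, -1] := by
  rw [← map_smul, ← map_smul, ← map_add]
  congr 1
  ext i; fin_cases i <;> simp <;> ring

section

variable {T : (Fin 2 → ℝ) →L[ℝ] (Fin 2 → ℝ)}
  (hT1 : T ![1, 1] = ![1, 0]) (hT2 : T ![1, -1] = ![1/2, 1/2])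
include hT1 hT2

lemma apply_eq_of_map_one_one_of_map_one_neg_one (x : Fin 2 → ℝ) :
    T x = ![(3 * x 0 + x 1) / 4, (x 0 - x 1) / 4] := by
  rw [map_eq_smul_map_one_one_add_smul_map_one_neg_one T x, hT1, hT2]
  ext i; fin_cases i <;> simp <;> ring

lemma opNorm_eq_one_of_map_one_one_of_map_one_neg_one : ‖T‖ = 1 := by
  apply le_antisymm
  · refine T.opNorm_le_bound zero_le_one fun x => ?_
    have h0 := abs_le.1 (norm_le_pi_norm x 0)
    have h1 := abs_le.1 (norm_le_pi_norm x 1)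
    rw [apply_eq_of_map_one_one_of_map_one_neg_one hT1 hT2, norm_vecCons_fin_two, one_mul]
    exact max_le (abs_le.2 ⟨by linarith, by linarith⟩) (abs_le.2 ⟨by linarith, by linarith⟩)
  · simpa [hT1, norm_vecCons_fin_two] using T.le_opNorm ![1, 1]

end

theorem stmt12 (T : (Fin 2 → ℝ) →L[ℝ] (Fin 2 → ℝ))
    (hT1 : T ![1, 1] = ![1, 0])
    (hT2 : T ![1, -1] = ![1/2, 1/2]) :
    ‖T ![1, 1]‖ = ‖T‖ ∧ BJOrth ![(1:ℝ), 1] ![-1/2, 1] ∧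
      ¬ BJOrth (T ![1, 1]) (T ![-1/2, 1]) := by
  have hTv : T ![-1/2, 1] = ![-1/8, -3/8] := by
    rw [apply_eq_of_map_one_one_of_map_one_neg_one hT1 hT2]; norm_num
  refine ⟨?_, bjOrth_one_one_of_mul_nonpos (by norm_num), fun hB => ?_⟩
  · rw [opNorm_eq_one_of_map_one_one_of_map_one_neg_one hT1 hT2, hT1, norm_vecCons_fin_two]
    norm_num
  · have hsum : ![(1 : ℝ), 0] + (1 : ℝ) • ![-1/8, -3/8] = ![7/8, -3/8] := by
      ext i; fin_cases i <;> norm_num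
    have := hB 1
    rw [hT1, hTv, hsum, norm_vecCons_fin_two, norm_vecCons_fin_two] at this
    norm_num at this
end

section
/- Let X be a reflexive smooth real Banach space and T : X → X a nonzero compact linear operator. Then there exists a unit vector x ∈ X such that T preserves Birkhoff-James orthogonality at x: for any y ∈ X, x ⊥_B y if and only if Tx ⊥_B Ty. -/
/-!
A compact operator `T` on a reflexive space attains its norm at a unit vector `x`: the closure of
the image of the unit ball is compact, so it contains a point `z` with `‖z‖ = ‖T‖`, and a norming
functional `g` of `z` makes `g ∘ T` a functional of norm `‖T‖`, which attains its norm by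
reflexivity. If `g` supports `T x`, then `‖T‖⁻¹ • g ∘ T` supports `x`. By James'
characterisation, `u ⊥_B v` holds iff some supporting functional of `u` vanishes at `v`;
in a smooth space the supporting functional is unique, so both `x ⊥_B y` and `T x ⊥_B T y`
say that `g (T y) = 0`.
-/

open Metric

section NormAttainment

variable {𝕜 X Y : Type*} [RCLike 𝕜] [NormedAddCommGroup X] [NormedSpace 𝕜 X]
  [NormedAddCommGroup Y] [NormedSpace 𝕜 Y]

theorem exists_norm_le_one_apply_eq_norm_of_surjective_inclusionInDoubleDual
    (hrefl : Function.Surjective (NormedSpace.inclusionInDoubleDual 𝕜 X)) (f : StrongDual 𝕜 X) :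
    ∃ x : X, ‖x‖ ≤ 1 ∧ f x = ‖f‖ := by
  obtain ⟨Φ, hΦ, hΦf⟩ := exists_dual_vector'' 𝕜 f
  obtain ⟨x, rfl⟩ := hrefl Φ
  exact ⟨x, (NormedSpace.inclusionInDoubleDualLi 𝕜).norm_map x ▸ hΦ, hΦf⟩

namespace IsCompactOperator

variable {T : X →L[𝕜] Y}

theorem exists_mem_closure_image_closedBall_norm_eq_opNorm (hT : IsCompactOperator T) :
    ∃ z ∈ closure (T '' closedBall 0 1), ‖z‖ = ‖T‖ := by
  obtain ⟨z, hzK, hmax⟩ := (hT.isCompact_closure_image_closedBall 1).exists_isMaxOn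
    ((nonempty_closedBall.2 zero_le_one).image T).closure continuous_norm.continuousOn
  refine ⟨z, hzK, le_antisymm ?_ ?_⟩
  · have hK : closure (T '' closedBall 0 1) ⊆ closedBall 0 ‖T‖ := by
      refine closure_minimal ?_ isClosed_closedBall
      rintro _ ⟨x, hx, rfl⟩
      exact mem_closedBall_zero_iff.2 (T.unit_le_opNorm x (mem_closedBall_zero_iff.1 hx))
    simpa using hK hzK
  · refine T.opNorm_le_of_unit_norm (norm_nonneg z) fun x hx => ?_
    exact hmax (subset_closure ⟨x, mem_closedBall_zero_iff.2 hx.le, rfl⟩)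

theorem exists_norm_le_one_norm_comp_eq_opNorm (hT : IsCompactOperator T) :
    ∃ g : StrongDual 𝕜 Y, ‖g‖ ≤ 1 ∧ ‖g.comp T‖ = ‖T‖ := by
  obtain ⟨z, hzK, hz⟩ := hT.exists_mem_closure_image_closedBall_norm_eq_opNorm
  obtain ⟨g, hg, hgz⟩ := exists_dual_vector'' 𝕜 z
  refine ⟨g, hg, le_antisymm ?_ ?_⟩
  · exact (g.opNorm_comp_le T).trans (mul_le_of_le_one_left (norm_nonneg T) hg)
  · have hK : closure (T '' closedBall 0 1) ⊆ {w | ‖g w‖ ≤ ‖g.comp T‖} := by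
      refine closure_minimal ?_ (isClosed_le (continuous_norm.comp g.continuous) continuous_const)
      rintro _ ⟨x, hx, rfl⟩
      exact (g.comp T).unit_le_opNorm x (mem_closedBall_zero_iff.1 hx)
    simpa [hgz, hz] using hK hzK

theorem exists_norm_eq_one_norm_apply_eq_opNorm
    (hrefl : Function.Surjective (NormedSpace.inclusionInDoubleDual 𝕜 X))
    (hT : IsCompactOperator T) (hT0 : T ≠ 0) :
    ∃ x : X, ‖x‖ = 1 ∧ ‖T x‖ = ‖T‖ := by
  obtain ⟨g, hg, hgT⟩ := hT.exists_norm_le_one_norm_comp_eq_opNorm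
  obtain ⟨x, hx, hgTx⟩ :=
    exists_norm_le_one_apply_eq_norm_of_surjective_inclusionInDoubleDual hrefl (g.comp T)
  have hTx : ‖T‖ ≤ ‖T x‖ :=
    calc ‖T‖ = ‖g (T x)‖ := by simpa [hgT] using congrArg norm hgTx.symm
      _ ≤ ‖g‖ * ‖T x‖ := g.le_opNorm _
      _ ≤ ‖T x‖ := mul_le_of_le_one_left (norm_nonneg _) hg
  have hx1 : 1 ≤ ‖x‖ :=
    le_of_mul_le_mul_left (by simpa using hTx.trans (T.le_opNorm x)) (norm_pos_iff.2 hT0)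
  exact ⟨x, le_antisymm hx hx1, le_antisymm (T.unit_le_opNorm x hx) hTx⟩

end IsCompactOperator

end NormAttainment

section BirkhoffJames

variable {X Y : Type*} [NormedAddCommGroup X] [NormedSpace ℝ X]
  [NormedAddCommGroup Y] [NormedSpace ℝ Y]

def IsSupportingFunctional (f : StrongDual ℝ X) (u : X) : Prop :=
  ‖f‖ ≤ 1 ∧ f u = ‖u‖

theorem IsSupportingFunctional.bjOrth {f : StrongDual ℝ X} {u v : X}
    (hf : IsSupportingFunctional f u) (hv : f v = 0) : BJOrth u v := fun l =>
  calc ‖u‖ = f (u + l • v) := by simp [hv, hf.2]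
    _ ≤ ‖f (u + l • v)‖ := Real.le_norm_self _
    _ ≤ ‖f‖ * ‖u + l • v‖ := f.le_opNorm _
    _ ≤ ‖u + l • v‖ := mul_le_of_le_one_left (norm_nonneg _) hf.1

theorem BJOrth.exists_isSupportingFunctional {u v : X} (h : BJOrth u v) :
    ∃ f : StrongDual ℝ X, IsSupportingFunctional f u ∧ f v = 0 := by
  set M := Submodule.span ℝ {v}
  have hu : ‖M.mkQ u‖ = ‖u‖ := by
    refine le_antisymm (Submodule.Quotient.norm_mk_le _ _) ?_
    refine (QuotientAddGroup.le_norm_iff (S := M.toAddSubgroup)).2 fun m hm => ?_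
    obtain ⟨l, hl⟩ := Submodule.mem_span_singleton.1 ((Submodule.Quotient.eq M).1 hm)
    rw [show m = u + l • v by rw [hl]; abel]
    exact h l
  obtain ⟨φ, hφ, hφu⟩ := exists_dual_vector'' ℝ (M.mkQ u)
  refine ⟨φ.comp M.mkQL, ⟨?_, ?_⟩, ?_⟩
  · refine ContinuousLinearMap.opNorm_le_bound _ zero_le_one fun y => ?_
    calc ‖φ (M.mkQ y)‖ ≤ ‖φ‖ * ‖M.mkQ y‖ := φ.le_opNorm _
      _ ≤ 1 * ‖y‖ := mul_le_mul hφ (Submodule.Quotient.norm_mk_le _ _) (norm_nonneg _) zero_le_one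
  · rw [← hu]
    simpa using hφu
  · have hv : M.mkQ v = 0 := (Submodule.Quotient.mk_eq_zero M).2 (Submodule.mem_span_singleton_self v)
    simp [hv]

theorem IsSupportingFunctional.norm_eq_one {f : StrongDual ℝ X} {u : X}
    (hf : IsSupportingFunctional f u) (hu : u ≠ 0) : ‖f‖ = 1 := by
  refine le_antisymm hf.1 (le_of_mul_le_mul_right ?_ (norm_pos_iff.2 hu))
  calc 1 * ‖u‖ = f u := by rw [one_mul, hf.2]
    _ ≤ ‖f‖ * ‖u‖ := (Real.le_norm_self _).trans (f.le_opNorm u)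

theorem IsSupportingFunctional.eq_of_smooth
    (hsm : ∀ z : X, ‖z‖ = 1 → ∃! f : StrongDual ℝ X, ‖f‖ = 1 ∧ f z = 1)
    {f g : StrongDual ℝ X} {u : X} (hu : u ≠ 0)
    (hf : IsSupportingFunctional f u) (hg : IsSupportingFunctional g u) : f = g := by
  have hunit {h : StrongDual ℝ X} (hh : IsSupportingFunctional h u) : h (‖u‖⁻¹ • u) = 1 := by
    simp [hh.2, hu]
  exact (hsm _ (norm_smul_inv_norm hu)).unique ⟨hf.norm_eq_one hu, hunit hf⟩
    ⟨hg.norm_eq_one hu, hunit hg⟩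

theorem bjOrth_iff_apply_eq_zero_of_smooth
    (hsm : ∀ z : X, ‖z‖ = 1 → ∃! f : StrongDual ℝ X, ‖f‖ = 1 ∧ f z = 1)
    {f : StrongDual ℝ X} {u v : X} (hu : u ≠ 0) (hf : IsSupportingFunctional f u) :
    BJOrth u v ↔ f v = 0 := by
  refine ⟨fun h => ?_, hf.bjOrth⟩
  obtain ⟨g, hg, hgv⟩ := h.exists_isSupportingFunctional
  rwa [hf.eq_of_smooth hsm hu hg]

theorem IsSupportingFunctional.smul_inv_opNorm_comp {g : StrongDual ℝ Y} {T : X →L[ℝ] Y} {x : X}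
    (hT : T ≠ 0) (hx : ‖T x‖ = ‖T‖ * ‖x‖) (hg : IsSupportingFunctional g (T x)) :
    IsSupportingFunctional (‖T‖⁻¹ • g.comp T) x := by
  have hTpos : 0 < ‖T‖ := norm_pos_iff.2 hT
  constructor
  · calc ‖‖T‖⁻¹ • g.comp T‖ = ‖T‖⁻¹ * ‖g.comp T‖ := by
          rw [norm_smul, norm_inv, norm_norm]
      _ ≤ ‖T‖⁻¹ * ‖T‖ := by
          gcongr
          exact (g.opNorm_comp_le T).trans (mul_le_of_le_one_left (norm_nonneg T) hg.1)
      _ = 1 := inv_mul_cancel₀ hTpos.ne'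
  · simp [hg.2, hx, hTpos.ne']

end BirkhoffJames

theorem stmt14_general {X : Type*} [NormedAddCommGroup X] [NormedSpace ℝ X]
    (hrefl : Function.Surjective (NormedSpace.inclusionInDoubleDual ℝ X))
    (hsm : ∀ z : X, ‖z‖ = 1 → ∃! f : X →L[ℝ] ℝ, ‖f‖ = 1 ∧ f z = 1)
    (T : X →L[ℝ] X) (hT : T ≠ 0) (hcomp : IsCompactOperator T) :
    ∃ x : X, ‖x‖ = 1 ∧ ∀ y : X, (BJOrth x y ↔ BJOrth (T x) (T y)) := by
  obtain ⟨x, hx1, hTx⟩ := hcomp.exists_norm_eq_one_norm_apply_eq_opNorm hrefl hT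
  obtain ⟨g, hg⟩ := exists_dual_vector'' ℝ (T x)
  have hx0 : x ≠ 0 := norm_ne_zero_iff.1 (hx1 ▸ one_ne_zero)
  have hTx0 : T x ≠ 0 := norm_ne_zero_iff.1 (hTx ▸ norm_ne_zero_iff.2 hT)
  have hf := IsSupportingFunctional.smul_inv_opNorm_comp hT (by rw [hTx, hx1, mul_one]) hg
  refine ⟨x, hx1, fun y => ?_⟩
  rw [bjOrth_iff_apply_eq_zero_of_smooth hsm hx0 hf, bjOrth_iff_apply_eq_zero_of_smooth hsm hTx0 hg]
  simp [hT]

theorem stmt14 {X : Type*} [NormedAddCommGroup X] [NormedSpace ℝ X] [CompleteSpace X]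
    (hrefl : Function.Surjective (NormedSpace.inclusionInDoubleDual ℝ X))
    (hsm : ∀ z : X, ‖z‖ = 1 → ∃! f : X →L[ℝ] ℝ, ‖f‖ = 1 ∧ f z = 1)
    (T : X →L[ℝ] X) (hT : T ≠ 0) (hcomp : IsCompactOperator T) :
    ∃ x : X, ‖x‖ = 1 ∧ ∀ y : X, (BJOrth x y ↔ BJOrth (T x) (T y)) :=
  stmt14_general hrefl hsm T hT hcomp
end

section
/- Let p be a natural number with p ≥ 2 and let T be a linear operator on ℓ_p² (ℝ² with the p-norm) that is not a scalar multiple of an isometry. Then the norm attainment set M_T = {x : ‖x‖_p = 1, ‖Tx‖_p = ‖T‖} has at most 2(8p − 5) elements. -/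
/-!
If `‖x‖ = 1` and `‖T x‖ = ‖T‖`, then `h ↦ ‖T (x + h v)‖ ^ p - ‖T‖ ^ p ‖x + h v‖ ^ p` is maximal
at `h = 0`, so its derivative vanishes there: `Tᵀ s(T x) = ‖T‖ ^ p s(x)`, where
`s(w) = |w| ^ (p - 2) w` acts coordinatewise. For `x₀ ≠ 0` these equations are homogeneous, and
writing `s(t) = σ t ^ (p - 1)` with `σ = ±1`, the slope `t = x₁ / x₀` is a common root of two
polynomials of degree at most `2 (p - 1)` for each sign `σ`. If both vanish identically, evaluating
and differentiating the resulting identities forces `T` to be a multiple of an isometry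
(a conformal matrix when `p = 2`, a scaled signed permutation when `p ≥ 3`). So there are at most
`4 (p - 1)` slopes, each norming vector is `±` the normalisation of `(0, 1)` or of some `(1, t)`,
and `M_T` has at most `2 (4 (p - 1) + 1) ≤ 2 (8 p - 5)` elements.
-/

open scoped ENNReal

open Polynomial

/-- `p⁻¹ · d/dw |w| ^ p`; meaningful only for `2 ≤ p`, because `p - 2` truncates. -/
noncomputable def signedPow (p : ℕ) (w : ℝ) : ℝ := |w| ^ (p - 2) * w

section SignedPow

variable {p : ℕ}

lemma signedPow_mul (x y : ℝ) : signedPow p (x * y) = signedPow p x * signedPow p y := by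
  simp only [signedPow, abs_mul, mul_pow]; ring

lemma signedPow_eq_zero_iff {x : ℝ} : signedPow p x = 0 ↔ x = 0 := by
  simp only [signedPow, mul_eq_zero, pow_eq_zero_iff', abs_eq_zero]
  tauto

lemma signedPow_sq (hp : 2 ≤ p) (w : ℝ) : signedPow p w ^ 2 = (w ^ (p - 1)) ^ 2 := by
  rw [signedPow, mul_pow, ← pow_mul, mul_comm (p - 2), pow_mul, sq_abs, ← pow_succ, ← pow_mul,
    ← pow_mul]
  congr 1; omega

lemma exists_signedPow_eq (hp : 2 ≤ p) (t : ℝ) :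
    ∃ σ : ℝ, (σ = 1 ∨ σ = -1) ∧ (p = 2 → σ = 1) ∧ signedPow p t = σ * t ^ (p - 1) := by
  have hpow : t ^ (p - 1) = t ^ (p - 2) * t := by rw [← pow_succ]; congr 1; omega
  rcases le_or_gt 0 t with ht | ht
  · exact ⟨1, .inl rfl, fun _ => rfl, by rw [signedPow, abs_of_nonneg ht, one_mul, hpow]⟩
  · refine ⟨(-1) ^ (p - 2), neg_one_pow_eq_or ℝ _, fun h => by simp [h], ?_⟩
    rw [signedPow, abs_of_neg ht, neg_pow, hpow, mul_assoc]

lemma hasDerivAt_abs_pow (hp : 2 ≤ p) (w : ℝ) :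
    HasDerivAt (fun z : ℝ => |z| ^ p) (p * signedPow p w) w := by
  have h := hasDerivAt_abs_rpow w (p := p) (by exact_mod_cast hp)
  have hcast : ((p : ℝ) - 2) = ((p - 2 : ℕ) : ℝ) := by push_cast [Nat.cast_sub hp]; ring
  simp only [Real.rpow_natCast, hcast] at h
  simpa [signedPow, mul_assoc] using h

lemma hasDerivAt_sum_abs_pow {ι : Type*} [Fintype ι] (hp : 2 ≤ p) (y w : ι → ℝ) :
    HasDerivAt (fun h : ℝ => ∑ i, |y i + h * w i| ^ p) (p * ∑ i, signedPow p (y i) * w i) 0 := by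
  rw [Finset.mul_sum]
  refine HasDerivAt.fun_sum fun i _ => ?_
  have := (hasDerivAt_abs_pow hp (y i + 0 * w i)).comp 0
    (((hasDerivAt_id (0 : ℝ)).mul_const (w i)).const_add (y i))
  simpa [Function.comp_def, mul_assoc] using this

end SignedPow

lemma HasDerivAt.eq_of_le_of_eq {f g : ℝ → ℝ} {f' g' x : ℝ} (hf : HasDerivAt f f' x)
    (hg : HasDerivAt g g' x) (hle : ∀ y, f y ≤ g y) (heq : f x = g x) : f' = g' := by
  have hmax : IsLocalMax (fun y => f y - g y) x :=
    Filter.Eventually.of_forall fun y => by simp only; linarith [hle y]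
  exact sub_eq_zero.mp (hmax.hasDerivAt_eq_zero (hf.sub hg))

lemma PiLp.apply_eq_sum_mul_single {p : ℝ≥0∞} {ι κ : Type*} [Fintype ι] [DecidableEq ι]
    (T : PiLp p (fun _ : ι => ℝ) →ₗ[ℝ] PiLp p (fun _ : κ => ℝ)) (y : PiLp p (fun _ : ι => ℝ))
    (k : κ) : T y k = ∑ i, y i * T (PiLp.single p i 1) k := by
  conv_lhs => rw [← (PiLp.basisFun p ℝ ι).sum_repr y]
  simp

lemma PiLp.exists_apply_eq_fin_two {p : ℝ≥0∞}
    (T : PiLp p (fun _ : Fin 2 => ℝ) →ₗ[ℝ] PiLp p (fun _ : Fin 2 => ℝ)) :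
    ∃ α β γ δ : ℝ, ∀ y, T y 0 = α * y 0 + β * y 1 ∧ T y 1 = γ * y 0 + δ * y 1 :=
  ⟨T (PiLp.single p 0 1) 0, T (PiLp.single p 1 1) 0, T (PiLp.single p 0 1) 1,
    T (PiLp.single p 1 1) 1, fun y => by
      simp only [PiLp.apply_eq_sum_mul_single T y, Fin.sum_univ_two, mul_comm, and_self]⟩

section LpSpace

variable {p : ℕ} [Fact (1 ≤ (p : ℝ≥0∞))] {ι κ : Type*} [Fintype ι] [Fintype κ]

lemma PiLp.norm_pow_eq_sum_abs_pow (x : PiLp p (fun _ : ι => ℝ)) :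
    ‖x‖ ^ p = ∑ i, |x i| ^ p := by
  have hp : 0 < p := by exact_mod_cast (zero_lt_one.trans_le (Fact.out : (1 : ℝ≥0∞) ≤ p))
  rw [PiLp.norm_eq_sum (by simpa using hp), ← Real.rpow_natCast, ← Real.rpow_mul (by positivity)]
  simp [hp.ne', Real.rpow_natCast]

lemma sum_signedPow_mul_eq_of_norm_apply_eq (hp : 2 ≤ p)
    (T : PiLp p (fun _ : ι => ℝ) →L[ℝ] PiLp p (fun _ : κ => ℝ)) {x : PiLp p (fun _ : ι => ℝ)}
    (hx : ‖T x‖ = ‖T‖ * ‖x‖) (v : PiLp p (fun _ : ι => ℝ)) :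
    ∑ k, signedPow p (T x k) * T v k = ‖T‖ ^ p * ∑ i, signedPow p (x i) * v i := by
  have hle : ∀ h : ℝ, ‖T (x + h • v)‖ ^ p ≤ ‖T‖ ^ p * ‖x + h • v‖ ^ p := fun h => by
    rw [← mul_pow]; exact pow_le_pow_left₀ (norm_nonneg _) (T.le_opNorm _) p
  simp only [PiLp.norm_pow_eq_sum_abs_pow, map_add, map_smul, PiLp.add_apply,
    PiLp.smul_apply, smul_eq_mul] at hle
  have hderiv := (hasDerivAt_sum_abs_pow hp (T x) (T v)).eq_of_le_of_eq
    ((hasDerivAt_sum_abs_pow hp x v).const_mul (‖T‖ ^ p)) hle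
    (by simp only [zero_mul, add_zero, ← PiLp.norm_pow_eq_sum_abs_pow, hx, mul_pow])
  have hp0 : (p : ℝ) ≠ 0 := by positivity
  exact mul_left_cancel₀ hp0 (by linear_combination hderiv)

end LpSpace

lemma ContinuousLinearMap.exists_eq_smul_isometry {E : Type*} [NormedAddCommGroup E]
    [NormedSpace ℝ E] (T : E →L[ℝ] E) (h : ∀ v, ‖T v‖ = ‖T‖ * ‖v‖) :
    ∃ (c : ℝ) (U : E →L[ℝ] E), (∀ v, ‖U v‖ = ‖v‖) ∧ T = c • U := by
  rcases eq_or_ne ‖T‖ 0 with hT | hT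
  · exact ⟨0, ContinuousLinearMap.id ℝ E, fun _ => rfl, by simpa using hT⟩
  · refine ⟨‖T‖, ‖T‖⁻¹ • T, fun v => ?_, by rw [smul_smul, mul_inv_cancel₀ hT, one_smul]⟩
    rw [smul_apply, norm_smul, h, norm_inv, norm_norm, inv_mul_cancel_left₀ hT]

lemma finite_and_ncard_le_of_forall_eq_smul {E : Type*} [NormedAddCommGroup E] [NormedSpace ℝ E]
    {S : Set E} (V : Finset E) (hS : ∀ x ∈ S, ‖x‖ = 1 ∧ ∃ v ∈ V, ∃ a : ℝ, x = a • v) :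
    S.Finite ∧ S.ncard ≤ 2 * V.card := by
  classical
  let F := V.biUnion fun v => {‖v‖⁻¹ • v, -(‖v‖⁻¹ • v)}
  have hSF : S ⊆ F := by
    intro x hx
    obtain ⟨hx1, v, hv, a, rfl⟩ := hS x hx
    rw [norm_smul, Real.norm_eq_abs] at hx1
    have ha : |a| = ‖v‖⁻¹ := eq_inv_of_mul_eq_one_left hx1
    simp only [F, Finset.coe_biUnion, Set.mem_iUnion, Finset.mem_coe, Finset.mem_insert,
      Finset.mem_singleton, exists_prop]
    refine ⟨v, hv, ?_⟩
    rcases abs_eq_abs.mp (ha.trans (abs_of_nonneg (inv_nonneg.mpr (norm_nonneg v))).symm)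
      with h | h <;> simp [h]
  have hF : F.card ≤ 2 * V.card := by
    refine (Finset.card_biUnion_le_card_mul _ _ 2 fun v _ => ?_).trans (by rw [mul_comm])
    exact Finset.card_le_two
  refine ⟨F.finite_toSet.subset hSF, ?_⟩
  exact (Set.ncard_le_ncard hSF F.finite_toSet).trans (by rwa [Set.ncard_coe_finset])

lemma eq_zero_or_eq_zero_of_C_mul_pow_eq {q : ℕ} (hq : 2 ≤ q) {k a b e w₀ w₁ : ℝ} (hk : k ≠ 0)
    (h : C k * (C a + C b * X) ^ q = C e * (C w₀ + C w₁ * X ^ q)) : a = 0 ∨ b = 0 := by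
  -- the linear coefficient, `k q a ^ (q - 1) b` on the left, vanishes on the right
  have h0 := congrArg (fun P => (derivative P).eval 0) h
  simp only [derivative_mul, derivative_C, derivative_pow, derivative_add, derivative_X,
    zero_mul, zero_add, mul_one, eval_mul, eval_C, eval_pow, eval_add, eval_X, mul_zero,
    add_zero] at h0
  rw [zero_pow (by omega), mul_zero, mul_zero, mul_zero] at h0
  have hq0 : q ≠ 0 := by omega
  have hq1 : q - 1 ≠ 0 := by omega
  simpa [hk, hq0, hq1] using h0

lemma abs_sq_add_abs_sq_eq_of_det_mul_eq {α β γ δ c e e' : ℝ} (hD : α * δ - β * γ ≠ 0)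
    (he : |e| = c) (he' : |e'| = c)
    (h₁ : (α * δ - β * γ) * α = e * δ) (h₂ : (α * δ - β * γ) * β = -(e * γ))
    (h₃ : (α * δ - β * γ) * γ = -(e' * β)) (h₄ : (α * δ - β * γ) * δ = e' * α) (a b : ℝ) :
    |α * a + β * b| ^ 2 + |γ * a + δ * b| ^ 2 = c * (|a| ^ 2 + |b| ^ 2) := by
  set D := α * δ - β * γ
  have hD2 : 0 < D ^ 2 := by positivity
  have hγδ : 0 < γ ^ 2 + δ ^ 2 := by
    by_contra h; exact hD (by simp [D, show γ = 0 by nlinarith, show δ = 0 by nlinarith])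
  have hαβ : 0 < α ^ 2 + β ^ 2 := by
    by_contra h; exact hD (by simp [D, show α = 0 by nlinarith, show β = 0 by nlinarith])
  have hec : e = c := by
    have : D ^ 2 = e * (γ ^ 2 + δ ^ 2) := by linear_combination δ * h₁ - γ * h₂
    rw [← he, abs_of_pos (pos_of_mul_pos_left (this ▸ hD2) hγδ.le)]
  have he'c : e' = c := by
    have : D ^ 2 = e' * (α ^ 2 + β ^ 2) := by linear_combination α * h₄ - β * h₃
    rw [← he', abs_of_pos (pos_of_mul_pos_left (this ▸ hD2) hαβ.le)]
  rw [hec] at h₁ h₂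
  rw [he'c] at h₃ h₄
  have K₁ : α * β + γ * δ = 0 :=
    mul_left_cancel₀ hD (by linear_combination β * h₁ + δ * h₃)
  have K₂ : α ^ 2 + γ ^ 2 = c := mul_left_cancel₀ hD (by linear_combination α * h₁ + γ * h₃)
  have K₃ : β ^ 2 + δ ^ 2 = c := mul_left_cancel₀ hD (by linear_combination β * h₂ + δ * h₄)
  simp only [sq_abs]
  linear_combination a ^ 2 * K₂ + 2 * a * b * K₁ + b ^ 2 * K₃

lemma abs_pow_add_abs_pow_eq_of_C_mul_pow_eq_of_two_le {q : ℕ} (hq : 2 ≤ q) {α β γ δ c e e' σ : ℝ}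
    (hD : α * δ - β * γ ≠ 0) (he : |e| = c) (he' : |e'| = c) (hσ : |σ| = 1)
    (hI : C (α * δ - β * γ) * (C α + C β * X) ^ q = C e * (C δ + C (-(σ * γ)) * X ^ q))
    (hII : C (α * δ - β * γ) * (C γ + C δ * X) ^ q = C e' * (C (-β) + C (σ * α) * X ^ q))
    (a b : ℝ) :
    |α * a + β * b| ^ (q + 1) + |γ * a + δ * b| ^ (q + 1) =
      c * (|a| ^ (q + 1) + |b| ^ (q + 1)) := by
  have I₀ := congrArg (eval 0) hI
  have I₁ := congrArg (eval 1) hI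
  have II₀ := congrArg (eval 0) hII
  have II₁ := congrArg (eval 1) hII
  simp only [eval_mul, eval_C, eval_pow, eval_add, eval_X, mul_zero, add_zero, mul_one, one_pow,
    zero_pow (by omega : q ≠ 0)] at I₀ I₁ II₀ II₁
  rcases eq_zero_or_eq_zero_of_C_mul_pow_eq hq hD hI with hα | hβ
  · subst hα
    have hγ : γ ≠ 0 := by rintro rfl; simp at hD
    have hβ : β ≠ 0 := by rintro rfl; simp at hD
    obtain rfl : δ = 0 :=
      (eq_zero_or_eq_zero_of_C_mul_pow_eq hq hD hII).resolve_left hγ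
    have hβp : |β| ^ (q + 1) = c := by
      rw [← he, ← mul_one |e|, ← hσ, ← abs_mul, ← abs_pow]
      congr 1
      exact mul_left_cancel₀ hγ (by linear_combination -I₁)
    have hγp : |γ| ^ (q + 1) = c := by
      rw [← he', ← abs_pow]
      congr 1
      exact mul_left_cancel₀ hβ (by linear_combination -II₀)
    simp only [zero_mul, zero_add, add_zero, abs_mul, mul_pow, hβp, hγp]
    ring
  · subst hβ
    have hα : α ≠ 0 := by rintro rfl; simp at hD
    have hδ : δ ≠ 0 := by rintro rfl; simp at hD
    obtain rfl : γ = 0 :=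
      (eq_zero_or_eq_zero_of_C_mul_pow_eq hq hD hII).resolve_right hδ
    have hαp : |α| ^ (q + 1) = c := by
      rw [← he, ← abs_pow]
      congr 1
      exact mul_left_cancel₀ hδ (by linear_combination I₀)
    have hδp : |δ| ^ (q + 1) = c := by
      rw [← he', ← mul_one |e'|, ← hσ, ← abs_mul, ← abs_pow]
      congr 1
      exact mul_left_cancel₀ hα (by linear_combination II₁)
    simp only [zero_mul, zero_add, add_zero, abs_mul, mul_pow, hαp, hδp]
    ring

lemma eq_zero_of_C_mul_pow_eq_of_det_eq_zero {q : ℕ} (hq : 1 ≤ q) {α β γ δ e e' σ : ℝ}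
    (hD : α * δ - β * γ = 0) (he : e ≠ 0) (he' : e' ≠ 0) (hσ : σ ≠ 0)
    (hI : C (α * δ - β * γ) * (C α + C β * X) ^ q = C e * (C δ + C (-(σ * γ)) * X ^ q))
    (hII : C (α * δ - β * γ) * (C γ + C δ * X) ^ q = C e' * (C (-β) + C (σ * α) * X ^ q)) :
    α = 0 ∧ β = 0 ∧ γ = 0 ∧ δ = 0 := by
  have I₀ := congrArg (eval 0) hI
  have I₁ := congrArg (eval 1) hI
  have II₀ := congrArg (eval 0) hII
  have II₁ := congrArg (eval 1) hII
  simp only [hD, eval_mul, eval_C, eval_pow, eval_add, eval_X, zero_mul, mul_zero, add_zero,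
    mul_one, one_pow, zero_pow (by omega : q ≠ 0)] at I₀ I₁ II₀ II₁
  have hδ : δ = 0 := by simpa [he] using I₀.symm
  have hβ : β = 0 := by simpa [he'] using II₀.symm
  subst hδ hβ
  have hγ : γ = 0 := by simpa [he, hσ] using I₁
  have hα : α = 0 := by simpa [he', hσ] using II₁
  exact ⟨hα, rfl, hγ, rfl⟩

lemma abs_pow_add_abs_pow_eq_of_C_mul_pow_eq {p : ℕ} (hp : 2 ≤ p) {α β γ δ c e e' σ : ℝ}
    (hD : α * δ - β * γ ≠ 0) (he : |e| = c) (he' : |e'| = c) (hσ : σ = 1 ∨ σ = -1)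
    (hσ₂ : p = 2 → σ = 1)
    (hI : C (α * δ - β * γ) * (C α + C β * X) ^ (p - 1) =
      C e * (C δ + C (-(σ * γ)) * X ^ (p - 1)))
    (hII : C (α * δ - β * γ) * (C γ + C δ * X) ^ (p - 1) =
      C e' * (C (-β) + C (σ * α) * X ^ (p - 1)))
    (a b : ℝ) : |α * a + β * b| ^ p + |γ * a + δ * b| ^ p = c * (|a| ^ p + |b| ^ p) := by
  obtain ⟨q, rfl⟩ : ∃ q, p = q + 1 := ⟨p - 1, by omega⟩
  simp only [Nat.add_sub_cancel] at hI hII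
  rcases (by omega : q = 1 ∨ 2 ≤ q) with rfl | hq
  · obtain rfl := hσ₂ rfl
    have I₀ := congrArg (eval 0) hI
    have I₁ := congrArg (eval 1) hI
    have II₀ := congrArg (eval 0) hII
    have II₁ := congrArg (eval 1) hII
    simp only [eval_mul, eval_C, eval_add, eval_X, mul_zero, add_zero, mul_one, pow_one]
      at I₀ I₁ II₀ II₁
    exact abs_sq_add_abs_sq_eq_of_det_mul_eq hD he he' I₀ (by linear_combination I₁ - I₀)
      (by linear_combination II₀) (by linear_combination II₁ - II₀) a b
  · exact abs_pow_add_abs_pow_eq_of_C_mul_pow_eq_of_two_le hq hD he he'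
      (by rcases hσ with rfl | rfl <;> simp) hI hII a b

/-- A critical slope `t` with `signedPow p t = σ t ^ q` satisfies
`k · signedPow p (u₀ + u₁ t) = c (w₀ + w₁ t ^ q)` for suitable coefficients; as
`signedPow p u ^ 2 = (u ^ q) ^ 2`, squaring makes `t` a root of this polynomial. -/
noncomputable def slopePoly (q : ℕ) (k u₀ u₁ c w₀ w₁ : ℝ) : ℝ[X] :=
  (C k * (C u₀ + C u₁ * X) ^ q) ^ 2 - (C c * (C w₀ + C w₁ * X ^ q)) ^ 2

section SlopePoly

variable (q : ℕ) (k u₀ u₁ c w₀ w₁ : ℝ)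

lemma natDegree_slopePoly_le : (slopePoly q k u₀ u₁ c w₀ w₁).natDegree ≤ 2 * q := by
  unfold slopePoly
  compute_degree

lemma eval_slopePoly (t : ℝ) :
    (slopePoly q k u₀ u₁ c w₀ w₁).eval t =
      (k * (u₀ + u₁ * t) ^ q) ^ 2 - (c * (w₀ + w₁ * t ^ q)) ^ 2 := by
  simp [slopePoly]

variable {q k u₀ u₁ c w₀ w₁}

lemma exists_C_mul_pow_eq_of_slopePoly_eq_zero (hc : 0 ≤ c) (h : slopePoly q k u₀ u₁ c w₀ w₁ = 0) :
    ∃ e, |e| = c ∧ C k * (C u₀ + C u₁ * X) ^ q = C e * (C w₀ + C w₁ * X ^ q) := by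
  rcases sq_eq_sq_iff_eq_or_eq_neg.mp (sub_eq_zero.mp h) with h | h
  · exact ⟨c, abs_of_nonneg hc, h⟩
  · exact ⟨-c, by rw [abs_neg, abs_of_nonneg hc], by rw [h, C_neg, neg_mul]⟩

end SlopePoly

/-- The equations `Tᵀ s(T x) = c · s(x)` at `x = (1, t)`, for `T` with matrix `!![α, β; γ, δ]`. -/
def IsCriticalSlope (p : ℕ) (α β γ δ c t : ℝ) : Prop :=
  α * signedPow p (α + β * t) + γ * signedPow p (γ + δ * t) = c ∧
    β * signedPow p (α + β * t) + δ * signedPow p (γ + δ * t) = c * signedPow p t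

section CriticalSlope

variable {p : ℕ} {α β γ δ c : ℝ}

lemma isCriticalSlope_div {a b : ℝ} (ha : a ≠ 0)
    (h₁ : α * signedPow p (α * a + β * b) + γ * signedPow p (γ * a + δ * b) = c * signedPow p a)
    (h₂ : β * signedPow p (α * a + β * b) + δ * signedPow p (γ * a + δ * b) = c * signedPow p b) :
    IsCriticalSlope p α β γ δ c (b / a) := by
  have hsa : signedPow p a ≠ 0 := signedPow_eq_zero_iff.not.mpr ha
  have hb : b = b / a * a := (div_mul_cancel₀ b ha).symm
  rw [hb, show α * a + β * (b / a * a) = (α + β * (b / a)) * a by ring,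
    show γ * a + δ * (b / a * a) = (γ + δ * (b / a)) * a by ring] at h₁ h₂
  simp only [signedPow_mul] at h₁ h₂
  exact ⟨mul_right_cancel₀ hsa (by linear_combination h₁),
    mul_right_cancel₀ hsa (by linear_combination h₂)⟩

lemma IsCriticalSlope.eval_slopePoly_eq_zero (hp : 2 ≤ p) {t σ : ℝ}
    (h : IsCriticalSlope p α β γ δ c t) (hσ : signedPow p t = σ * t ^ (p - 1)) :
    (slopePoly (p - 1) (α * δ - β * γ) α β c δ (-(σ * γ))).eval t = 0 ∧
      (slopePoly (p - 1) (α * δ - β * γ) γ δ c (-β) (σ * α)).eval t = 0 := by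
  have hu : (α * δ - β * γ) * signedPow p (α + β * t) = c * (δ - γ * signedPow p t) := by
    linear_combination δ * h.1 - γ * h.2
  have hv : (α * δ - β * γ) * signedPow p (γ + δ * t) = c * (α * signedPow p t - β) := by
    linear_combination α * h.2 - β * h.1
  have hu₂ := signedPow_sq hp (α + β * t)
  have hv₂ := signedPow_sq hp (γ + δ * t)
  rw [eval_slopePoly, eval_slopePoly]
  constructor
  · linear_combination -(α * δ - β * γ) ^ 2 * hu₂
      + ((α * δ - β * γ) * signedPow p (α + β * t) + c * (δ - γ * signedPow p t)) * hu
      - c ^ 2 * γ * (2 * δ - γ * signedPow p t - σ * γ * t ^ (p - 1)) * hσ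
  · linear_combination -(α * δ - β * γ) ^ 2 * hv₂
      + ((α * δ - β * γ) * signedPow p (γ + δ * t) + c * (α * signedPow p t - β)) * hv
      + c ^ 2 * α * (α * signedPow p t + σ * α * t ^ (p - 1) - 2 * β) * hσ

lemma IsCriticalSlope.slopePoly_ne_zero_or_ne_zero (hp : 2 ≤ p) (hc : 0 < c)
    (hnot : ¬ ∀ a b : ℝ, |α * a + β * b| ^ p + |γ * a + δ * b| ^ p = c * (|a| ^ p + |b| ^ p))
    {t σ : ℝ} (h : IsCriticalSlope p α β γ δ c t) (hσ : σ = 1 ∨ σ = -1) (hσ₂ : p = 2 → σ = 1) :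
    slopePoly (p - 1) (α * δ - β * γ) α β c δ (-(σ * γ)) ≠ 0 ∨
      slopePoly (p - 1) (α * δ - β * γ) γ δ c (-β) (σ * α) ≠ 0 := by
  by_contra! ⟨h₁, h₂⟩
  obtain ⟨e, he, hI⟩ := exists_C_mul_pow_eq_of_slopePoly_eq_zero hc.le h₁
  obtain ⟨e', he', hII⟩ := exists_C_mul_pow_eq_of_slopePoly_eq_zero hc.le h₂
  by_cases hD : α * δ - β * γ = 0
  · have hne : ∀ {x : ℝ}, |x| = c → x ≠ 0 := fun hx h0 => hc.ne' (by rw [← hx, h0, abs_zero])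
    obtain ⟨rfl, -, rfl, -⟩ := eq_zero_of_C_mul_pow_eq_of_det_eq_zero (by omega) hD (hne he)
      (hne he') (by rcases hσ with rfl | rfl <;> norm_num) hI hII
    exact hc.ne (by simpa using h.1)
  · exact hnot (abs_pow_add_abs_pow_eq_of_C_mul_pow_eq hp hD he he' hσ hσ₂ hI hII)

lemma exists_finset_isCriticalSlope (hp : 2 ≤ p) (hc : 0 < c)
    (hnot : ¬ ∀ a b : ℝ, |α * a + β * b| ^ p + |γ * a + δ * b| ^ p = c * (|a| ^ p + |b| ^ p)) :
    ∃ W : Finset ℝ, W.card ≤ 4 * (p - 1) ∧ ∀ t, IsCriticalSlope p α β γ δ c t → t ∈ W := by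
  classical
  let P : ℝ → ℝ[X] := fun σ =>
    if slopePoly (p - 1) (α * δ - β * γ) α β c δ (-(σ * γ)) = 0 then
      slopePoly (p - 1) (α * δ - β * γ) γ δ c (-β) (σ * α)
    else slopePoly (p - 1) (α * δ - β * γ) α β c δ (-(σ * γ))
  have hcard : ∀ σ, (P σ).roots.toFinset.card ≤ 2 * (p - 1) := fun σ =>
    (Multiset.toFinset_card_le _).trans <| (card_roots' _).trans <| by
      simp only [P]; split_ifs <;> exact natDegree_slopePoly_le ..
  refine ⟨(P 1).roots.toFinset ∪ (P (-1)).roots.toFinset, ?_, fun t ht => ?_⟩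
  · have := Finset.card_union_le (P 1).roots.toFinset (P (-1)).roots.toFinset
    have := hcard 1
    have := hcard (-1)
    omega
  obtain ⟨σ, hσ, hσ₂, hs⟩ := exists_signedPow_eq hp t
  obtain ⟨hroot₁, hroot₂⟩ := ht.eval_slopePoly_eq_zero hp hs
  have hne := ht.slopePoly_ne_zero_or_ne_zero hp hc hnot hσ hσ₂
  have hmem : t ∈ (P σ).roots.toFinset := by
    simp only [P, Multiset.mem_toFinset]
    split_ifs with h₀
    · exact (mem_roots (hne.resolve_left (not_not.mpr h₀))).mpr hroot₂
    · exact (mem_roots h₀).mpr hroot₁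
  rcases hσ with rfl | rfl <;> simp [hmem]

end CriticalSlope

section Plane

variable {p : ℕ} [Fact (1 ≤ (p : ℝ≥0∞))]
  (T : PiLp p (fun _ : Fin 2 => ℝ) →L[ℝ] PiLp p (fun _ : Fin 2 => ℝ)) {α β γ δ : ℝ}
  (hT : ∀ y, T y 0 = α * y 0 + β * y 1 ∧ T y 1 = γ * y 0 + δ * y 1)
include hT

lemma isCriticalSlope_of_norm_apply_eq (hp : 2 ≤ p) {x : PiLp p (fun _ : Fin 2 => ℝ)}
    (hx : ‖T x‖ = ‖T‖ * ‖x‖) (hx₀ : x 0 ≠ 0) :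
    IsCriticalSlope p α β γ δ (‖T‖ ^ p) (x 1 / x 0) := by
  have h := sum_signedPow_mul_eq_of_norm_apply_eq hp T hx
  refine isCriticalSlope_div hx₀ ?_ ?_
  · simpa [Fin.sum_univ_two, hT, mul_comm] using h (PiLp.single p 0 1)
  · simpa [Fin.sum_univ_two, hT, mul_comm] using h (PiLp.single p 1 1)

lemma norm_apply_eq_of_forall_abs_pow_add_abs_pow_eq (hp : 1 ≤ p)
    (h : ∀ a b : ℝ, |α * a + β * b| ^ p + |γ * a + δ * b| ^ p = ‖T‖ ^ p * (|a| ^ p + |b| ^ p))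
    (v : PiLp p (fun _ : Fin 2 => ℝ)) : ‖T v‖ = ‖T‖ * ‖v‖ := by
  refine (pow_left_inj₀ (norm_nonneg _) (by positivity) (by omega : p ≠ 0)).mp ?_
  simp only [mul_pow, PiLp.norm_pow_eq_sum_abs_pow, Fin.sum_univ_two, hT, h]

end Plane

theorem stmt17 (p : ℕ) (hp : 2 ≤ p) [Fact (1 ≤ (p : ℝ≥0∞))]
    (T : PiLp (p : ℝ≥0∞) (fun _ : Fin 2 => ℝ) →L[ℝ] PiLp (p : ℝ≥0∞) (fun _ : Fin 2 => ℝ))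
    (hnotiso : ¬ ∃ (c : ℝ) (U : PiLp (p : ℝ≥0∞) (fun _ : Fin 2 => ℝ) →L[ℝ]
        PiLp (p : ℝ≥0∞) (fun _ : Fin 2 => ℝ)),
      (∀ v, ‖U v‖ = ‖v‖) ∧ T = c • U) :
    {x : PiLp (p : ℝ≥0∞) (fun _ : Fin 2 => ℝ) | ‖x‖ = 1 ∧ ‖T x‖ = ‖T‖}.Finite ∧
      {x : PiLp (p : ℝ≥0∞) (fun _ : Fin 2 => ℝ) | ‖x‖ = 1 ∧ ‖T x‖ = ‖T‖}.ncard
        ≤ 2 * (8 * p - 5) := by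
  classical
  obtain ⟨α, β, γ, δ, hT⟩ := PiLp.exists_apply_eq_fin_two T.toLinearMap
  have hnorm : ¬ ∀ v, ‖T v‖ = ‖T‖ * ‖v‖ := fun h => hnotiso (T.exists_eq_smul_isometry h)
  have hc : 0 < ‖T‖ ^ p := pow_pos (norm_pos_iff.mpr fun h₀ => hnorm (by simp [h₀])) p
  obtain ⟨W, hWcard, hW⟩ := exists_finset_isCriticalSlope hp hc
    fun h => hnorm (norm_apply_eq_of_forall_abs_pow_add_abs_pow_eq T hT (by omega) h)
  let V := insert (PiLp.single (p : ℝ≥0∞) 1 1) (W.image fun t => WithLp.toLp (p : ℝ≥0∞) ![1, t])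
  have hV : V.card ≤ 4 * (p - 1) + 1 :=
    (Finset.card_insert_le _ _).trans (Nat.add_le_add_right (Finset.card_image_le.trans hWcard) 1)
  have hlines := finite_and_ncard_le_of_forall_eq_smul (S := {x | ‖x‖ = 1 ∧ ‖T x‖ = ‖T‖}) V ?_
  · exact ⟨hlines.1, hlines.2.trans (by omega)⟩
  rintro x ⟨hx₁, hxT⟩
  refine ⟨hx₁, ?_⟩
  by_cases hx₀ : x 0 = 0
  · exact ⟨_, Finset.mem_insert_self _ _, x 1, by ext i; fin_cases i <;> simp [hx₀]⟩
  · have ht := hW _ (isCriticalSlope_of_norm_apply_eq T hT hp (by rw [hxT, hx₁, mul_one]) hx₀)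
    refine ⟨_, Finset.mem_insert_of_mem (Finset.mem_image_of_mem _ ht), x 0, ?_⟩
    ext i; fin_cases i <;> simp [mul_div_cancel₀ _ hx₀]
end

section
/- Let X be a real normed space, x a unit vector, and suppose both u ∈ x⁺ ∩ x⁻ holds for u, i.e., ‖x + λu‖ ≥ ‖x‖ for all λ ≥ 0 and all λ ≤ 0. Then x is Birkhoff-James orthogonal to u; conversely, every u ∈ X satisfies u ∈ x⁺ or u ∈ x⁻, so X = (x⁺ \ x^⊥) ∪ (x⁻ \ x^⊥) ∪ x^⊥. -/
/- `c` lies between any two points where `f` is below `f c`, and convexity bounds `f c` by the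
larger of the two values. -/
theorem ConvexOn.forall_ge_le_or_forall_le_le {𝕜 β : Type*} [Field 𝕜] [LinearOrder 𝕜]
    [IsStrictOrderedRing 𝕜] [AddCommMonoid β] [LinearOrder β] [IsOrderedAddMonoid β]
    [Module 𝕜 β] [PosSMulStrictMono 𝕜 β] {f : 𝕜 → β} (hf : ConvexOn 𝕜 Set.univ f) (c : 𝕜) :
    (∀ l, c ≤ l → f c ≤ f l) ∨ (∀ l, l ≤ c → f c ≤ f l) := by
  by_contra! h
  obtain ⟨⟨a, hca, hfa⟩, ⟨b, hbc, hfb⟩⟩ := h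
  have hc : c ∈ segment 𝕜 b a := Icc_subset_segment ⟨hbc, hca⟩
  exact (hf.le_on_segment trivial trivial hc).not_gt (max_lt hfb hfa)

theorem convexOn_norm_add_smul {E : Type*} [SeminormedAddCommGroup E] [NormedSpace ℝ E]
    (x v : E) : ConvexOn ℝ Set.univ fun l : ℝ => ‖x + l • v‖ := by
  have := convexOn_univ_norm.comp_affineMap (AffineMap.lineMap x (x + v) : ℝ →ᵃ[ℝ] E)
  simpa [Function.comp_def, AffineMap.lineMap_apply_module', add_comm] using this

theorem stmt18_general {X : Type*} [NormedAddCommGroup X] [NormedSpace ℝ X]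
    (x : X) (u : X)
    (hp : ∀ l : ℝ, 0 ≤ l → ‖x‖ ≤ ‖x + l • u‖)
    (hm : ∀ l : ℝ, l ≤ 0 → ‖x‖ ≤ ‖x + l • u‖) :
    BJOrth x u ∧
      ∀ v : X, (∀ l : ℝ, 0 ≤ l → ‖x‖ ≤ ‖x + l • v‖) ∨
        (∀ l : ℝ, l ≤ 0 → ‖x‖ ≤ ‖x + l • v‖) := by
  refine ⟨fun l => (le_total 0 l).elim (hp l) (hm l), fun v => ?_⟩
  simpa using (convexOn_norm_add_smul x v).forall_ge_le_or_forall_le_le 0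

theorem stmt18 {X : Type*} [NormedAddCommGroup X] [NormedSpace ℝ X]
    (x : X) (hx : ‖x‖ = 1) (u : X)
    (hp : ∀ l : ℝ, 0 ≤ l → ‖x‖ ≤ ‖x + l • u‖)
    (hm : ∀ l : ℝ, l ≤ 0 → ‖x‖ ≤ ‖x + l • u‖) :
    BJOrth x u ∧
      ∀ v : X, (∀ l : ℝ, 0 ≤ l → ‖x‖ ≤ ‖x + l • v‖) ∨
        (∀ l : ℝ, l ≤ 0 → ‖x‖ ≤ ‖x + l • v‖) :=
  stmt18_general x u hp hm
end
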